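/- Fix K'* ⊆ 𝒦 with ∁K'* = 𝒦∖K'* and suppose R* := I(X_{K'*}; Y | X_{∁K'*}) − I(X_{K'*}; Z | X_{∁K'*}) > 0. Let (R_1^s, R_1^o, …, R_K^s, R_K^o) be a tuple of nonnegative reals with R_k^s = 0 for all k ∈ ∁K'* which satisfies, for all S ⊆ K'*, S' ⊆ S, and T ⊆ ∁K'*, ∑_{k∈S} R_k^s + ∑_{k∈S∖S'} R_k^o + ∑_{k∈T} R_k^o ≤ [I(X_S, X_T; Y | X_{K'*∖S}, X_{∁K'*∖T}) − I(X_{S'}; Z | X_{∁K'*})]^+, and suppose ∑_{k∈K'*} R_k^s = R*. Then ∑_{k∈K'*} R_k^o ≤ I(X_{K'*}; Z | X_{∁K'*}). -/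

import Mathlib

open MeasureTheory ProbabilityTheory BigOperators

/-- Shannon entropy (base 2) of a finitely-valued random variable. -/
noncomputable def entropy2 {Ω : Type*} [MeasurableSpace Ω] (μ : Measure Ω)
    {α : Type*} [Fintype α] (X : Ω → α) : ℝ :=
  - ∑ a : α, ((μ (X ⁻¹' {a})).toReal * Real.logb 2 (μ (X ⁻¹' {a})).toReal)

/-- Mutual information `I(X; Y)` (base 2) of finitely-valued random variables. -/
noncomputable def mi {Ω : Type*} [MeasurableSpace Ω] (μ : Measure Ω)
    {α β : Type*} [Fintype α] [Fintype β] (X : Ω → α) (Y : Ω → β) : ℝ :=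
  entropy2 μ X + entropy2 μ Y - entropy2 μ (fun ω => (X ω, Y ω))

/-- Conditional mutual information `I(X; Y | Z)` (base 2). -/
noncomputable def cmi {Ω : Type*} [MeasurableSpace Ω] (μ : Measure Ω)
    {α β γ : Type*} [Fintype α] [Fintype β] [Fintype γ]
    (X : Ω → α) (Y : Ω → β) (Z : Ω → γ) : ℝ :=
  entropy2 μ (fun ω => (X ω, Z ω)) + entropy2 μ (fun ω => (Y ω, Z ω))
    - entropy2 μ (fun ω => (X ω, Y ω, Z ω)) - entropy2 μ Z

/-- The tuple `X_S = (X_k)_{k ∈ S}` of a family of random variables. -/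
def tuple {Ω ι : Type*} {𝒳 : ι → Type*} (X : ∀ k, Ω → 𝒳 k) (S : Finset ι) :
    Ω → ((k : S) → 𝒳 k) :=
  fun ω k => X k ω


/-! Write `a = I(X_{K'*}; Y | X_{∁K'*})` and `b = I(X_{K'*}; Z | X_{∁K'*})`. The rate constraint
for `S = K'*`, `S' = T = ∅` involves only tuples over `∅`, which carry no information, and reads
`(a - b) + ∑_{k ∈ K'*} R_k^o ≤ [a]^+`. If `a ≥ 0` this is the claim; if `a < 0` it would force
`∑ R_k^o ≤ b - a < 0`, since `a - b = R* > 0`. -/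

section Recoding

variable {Ω : Type*} [MeasurableSpace Ω] (μ : Measure Ω)

theorem entropy2_comp_of_injective {α β : Type*} [Fintype α] [Fintype β] (X : Ω → α)
    {f : α → β} (hf : Function.Injective f) :
    entropy2 μ (fun ω => f (X ω)) = entropy2 μ X := by
  classical
  have hfiber (a : α) : (fun ω => f (X ω)) ⁻¹' {f a} = X ⁻¹' {a} := by
    ext ω; simp [hf.eq_iff]
  unfold entropy2
  congr 1
  refine (Fintype.sum_of_injective f hf _ _ (fun b hb => ?_) fun a => by rw [hfiber]).symm
  have hempty : (fun ω => f (X ω)) ⁻¹' {b} = ∅ :=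
    Set.eq_empty_of_forall_notMem fun ω hω => hb ⟨X ω, hω⟩
  simp [hempty]

variable {α β γ : Type*} [Fintype α] [Fintype β] [Fintype γ]

theorem cmi_comp_of_injective {α' γ' : Type*} [Fintype α'] [Fintype γ']
    (A : Ω → α) (Y : Ω → β) (B : Ω → γ) {f : α → α'} {g : γ → γ'}
    (hf : Function.Injective f) (hg : Function.Injective g) :
    cmi μ (fun ω => f (A ω)) Y (fun ω => g (B ω)) = cmi μ A Y B := by
  have hAB := entropy2_comp_of_injective μ (fun ω => (A ω, B ω)) (hf.prodMap hg)
  have hYB := entropy2_comp_of_injective μ (fun ω => (Y ω, B ω))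
    (Function.injective_id.prodMap hg)
  have hAYB := entropy2_comp_of_injective μ (fun ω => (A ω, Y ω, B ω))
    (hf.prodMap (Function.injective_id.prodMap hg))
  simp only [Prod.map_apply, id] at hAB hYB hAYB
  simp only [cmi, hAB, hYB, hAYB, entropy2_comp_of_injective μ B hg]

theorem cmi_prod_unique {δ ε : Type*} [Fintype δ] [Fintype ε] [Unique δ] [Unique ε]
    (A : Ω → α) (D : Ω → δ) (Y : Ω → β) (E : Ω → ε) (B : Ω → γ) :
    cmi μ (fun ω => (A ω, D ω)) Y (fun ω => (E ω, B ω)) = cmi μ A Y B := by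
  obtain rfl : D = fun _ => default := funext fun _ => Unique.eq_default _
  obtain rfl : E = fun _ => default := funext fun _ => Unique.eq_default _
  exact cmi_comp_of_injective μ A Y B (f := fun a => (a, default)) (g := Prod.mk default)
    (Prod.mk_left_injective _) (Prod.mk_right_injective _)

theorem cmi_of_unique [Unique α] (A : Ω → α) (Y : Ω → β) (B : Ω → γ) :
    cmi μ A Y B = 0 := by
  obtain rfl : A = fun _ => default := funext fun _ => Unique.eq_default _
  have hAB := entropy2_comp_of_injective μ B (Prod.mk_right_injective (default : α))
  have hAYB := entropy2_comp_of_injective μ (fun ω => (Y ω, B ω))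
    (Prod.mk_right_injective (default : α))
  simp only [cmi, hAB, hAYB]
  ring

end Recoding

theorem stmt_9_general
    {Ω : Type} [MeasurableSpace Ω] (μ : Measure Ω)
    {K : ℕ}
    {𝒳 : Fin K → Type} [∀ k, Fintype (𝒳 k)]
    (X : ∀ k, Ω → 𝒳 k)
    {𝒴 𝒵 : Type} [Fintype 𝒴] [Fintype 𝒵]
    (Y : Ω → 𝒴) (Z : Ω → 𝒵)
    (K'star : Finset (Fin K))
    (hpos : 0 < cmi μ (tuple X K'star) Y (tuple X K'starᶜ)
        - cmi μ (tuple X K'star) Z (tuple X K'starᶜ))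
    (Rs Ro : Fin K → ℝ) (hRo : ∀ k, 0 ≤ Ro k)
    (hRate : ∀ S ⊆ K'star, ∀ S' ⊆ S, ∀ T ⊆ K'starᶜ,
      ∑ k ∈ S, Rs k + ∑ k ∈ S \ S', Ro k + ∑ k ∈ T, Ro k ≤
        max (cmi μ (fun ω => (tuple X S ω, tuple X T ω)) Y
              (fun ω => (tuple X (K'star \ S) ω, tuple X (K'starᶜ \ T) ω))
            - cmi μ (tuple X S') Z (tuple X K'starᶜ)) 0)
    (hsum : ∑ k ∈ K'star, Rs k =
      cmi μ (tuple X K'star) Y (tuple X K'starᶜ)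
        - cmi μ (tuple X K'star) Z (tuple X K'starᶜ)) :
    ∑ k ∈ K'star, Ro k ≤ cmi μ (tuple X K'star) Z (tuple X K'starᶜ) := by
  have hfull := hRate K'star subset_rfl ∅ (Finset.empty_subset _) ∅ (Finset.empty_subset _)
  rw [Finset.sdiff_self, Finset.sdiff_empty (s := K'starᶜ), cmi_prod_unique,
    cmi_of_unique μ (tuple X ∅), sub_zero] at hfull
  simp only [Finset.sdiff_empty, Finset.sum_empty, add_zero] at hfull
  have hRo_sum : 0 ≤ ∑ k ∈ K'star, Ro k := Finset.sum_nonneg fun k _ => hRo k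
  rcases le_max_iff.mp hfull with hle | hle <;> linarith

theorem stmt_9
    {Ω : Type} [MeasurableSpace Ω] (μ : Measure Ω) [IsProbabilityMeasure μ]
    {K : ℕ} (hK : 0 < K)
    {𝒳 : Fin K → Type} [∀ k, Fintype (𝒳 k)] [∀ k, MeasurableSpace (𝒳 k)]
    (X : ∀ k, Ω → 𝒳 k) (hX : ∀ k, Measurable (X k))
    {𝒴 𝒵 : Type} [Fintype 𝒴] [MeasurableSpace 𝒴] [Fintype 𝒵] [MeasurableSpace 𝒵]
    (Y : Ω → 𝒴) (hY : Measurable Y) (Z : Ω → 𝒵) (hZ : Measurable Z)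
    (hIndep : iIndepFun X μ)
    (K'star : Finset (Fin K))
    (hpos : 0 < cmi μ (tuple X K'star) Y (tuple X K'starᶜ)
        - cmi μ (tuple X K'star) Z (tuple X K'starᶜ))
    (Rs Ro : Fin K → ℝ) (hRs : ∀ k, 0 ≤ Rs k) (hRo : ∀ k, 0 ≤ Ro k)
    (hRs0 : ∀ k ∈ K'starᶜ, Rs k = 0)
    (hRate : ∀ S ⊆ K'star, ∀ S' ⊆ S, ∀ T ⊆ K'starᶜ,
      ∑ k ∈ S, Rs k + ∑ k ∈ S \ S', Ro k + ∑ k ∈ T, Ro k ≤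
        max (cmi μ (fun ω => (tuple X S ω, tuple X T ω)) Y
              (fun ω => (tuple X (K'star \ S) ω, tuple X (K'starᶜ \ T) ω))
            - cmi μ (tuple X S') Z (tuple X K'starᶜ)) 0)
    (hsum : ∑ k ∈ K'star, Rs k =
      cmi μ (tuple X K'star) Y (tuple X K'starᶜ)
        - cmi μ (tuple X K'star) Z (tuple X K'starᶜ)) :
    ∑ k ∈ K'star, Ro k ≤ cmi μ (tuple X K'star) Z (tuple X K'starᶜ) :=
  stmt_9_general μ X Y Z K'star hpos Rs Ro hRo hRate hsum
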